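/- arXiv:2006.00376 — 2 statements merged into one kernel-verified Lean document; each statement's English description precedes it below -/
import Mathlib

section
/- In the building-block request sequence (item requested at time 1, then at times Z-z+1 through Z, with z = ⌊Z/2⌋), if all requests miss, the total delayed hits latency is Z + z(z+1)/2; if the first request hits and the rest miss, the total latency is (Z+1)z - z(z+1)/2. -/
/-- Earliest in-flight miss for request `t` in the delayed hits model. -/
noncomputable def pD (Z : ℕ) (σ : ℕ → ℕ) (b : ℕ → Bool) (t : ℕ) : ℕ :=
  sInf {s | max 1 (t + 1 - Z) ≤ s ∧ s ≤ t ∧ b s = false ∧ σ s = σ t}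

/-- Total delayed hits latency over times `1..T` (item `0` means no request). -/
noncomputable def latN (Z T : ℕ) (σ : ℕ → ℕ) (b : ℕ → Bool) : ℕ :=
  ∑ t ∈ Finset.Icc 1 T, if σ t = 0 ∨ b t then 0 else Z - (t - pD Z σ b t)

/-!
With `z = Z / 2` the whole block lies within `Z` steps of time `1`. So if all requests miss, the
miss at time `1` covers every later request and the request at time `Z - z + 1 + k` waits
`z - k`; these add up to `z(z+1)/2`. If time `1` hits, the first miss in the block is at
`Z - z + 1`, it covers the rest of the block, and the request at `Z - z + 1 + k` waits `Z - k`,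
for a total of `∑_{k<z} (Z - k) = (Z + 1)z - z(z+1)/2`.
-/

open Finset

theorem Finset.sum_range_tsub_self (n : ℕ) : ∑ k ∈ range n, (n - k) = n * (n + 1) / 2 := by
  have h := sum_range_reflect (fun j => j) (n + 1)
  simp only [sum_range_succ, add_tsub_cancel_right, tsub_self, add_zero] at h
  rw [h, ← sum_range_succ (fun j => j), sum_range_id, add_tsub_cancel_right, mul_comm]

theorem Finset.sum_range_tsub_of_le {m n : ℕ} (hnm : n ≤ m) :
    ∑ k ∈ range n, (m - k) = (m + 1) * n - n * (n + 1) / 2 := by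
  have hsplit : ∑ k ∈ range n, (m - k) = ∑ k ∈ range n, ((m - n) + (n - k)) :=
    sum_congr rfl fun k hk => by have := mem_range.1 hk; omega
  have heven : n * (n + 1) / 2 * 2 = n * (n + 1) :=
    Nat.div_mul_cancel (even_iff_two_dvd.1 (Nat.even_mul_succ_self n))
  rw [hsplit, sum_add_distrib, sum_const, card_range, smul_eq_mul, sum_range_tsub_self]
  obtain ⟨d, rfl⟩ := Nat.exists_eq_add_of_le hnm
  have hexpand : (n + d + 1) * n = n * d + n * (n + 1) := by ring
  simp only [add_tsub_cancel_left]
  omega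

theorem Finset.sum_Icc_succ_eq_sum_range {M : Type*} [AddCommMonoid M] (f : ℕ → M) (m n : ℕ) :
    ∑ t ∈ Icc (m + 1) n, f t = ∑ k ∈ range (n - m), f (m + 1 + k) := by
  rw [← Ico_add_one_right_eq_Icc, sum_Ico_eq_sum_range, Nat.add_sub_add_right]

theorem pD_eq_of_forall_lt {Z t p : ℕ} {σ : ℕ → ℕ} {b : ℕ → Bool} (hlo : max 1 (t + 1 - Z) ≤ p) (hpt : p ≤ t)
    (hb : b p = false) (hσ : σ p = σ t)
    (hmin : ∀ s, max 1 (t + 1 - Z) ≤ s → s < p → b s = false → σ s ≠ σ t) :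
    pD Z σ b t = p :=
  IsLeast.csInf_eq ⟨⟨hlo, hpt, hb, hσ⟩,
    fun s hs => not_lt.1 fun hsp => hmin s hs.1 hsp hs.2.2.1 hs.2.2.2⟩

theorem latN_eq_sum {Z T : ℕ} {σ : ℕ → ℕ} {b : ℕ → Bool} {S : Finset ℕ}
    (hS : ∀ t ∈ Icc 1 T, t ∈ S ↔ σ t ≠ 0 ∧ b t = false) (hST : S ⊆ Icc 1 T) :
    latN Z T σ b = ∑ t ∈ S, (Z - (t - pD Z σ b t)) := by
  refine (sum_subset_zero_on_sdiff hST (fun t ht => ?_) (fun t ht => ?_)).symm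
  · obtain ⟨htT, htS⟩ := mem_sdiff.1 ht
    rw [hS t htT] at htS
    simp_all
  · have := (hS t (hST ht)).1 ht
    simp_all

theorem pD_eq_one {Z t : ℕ} {σ : ℕ → ℕ} {b : ℕ → Bool} (hb : b 1 = false) (hσ : σ 1 = σ t)
    (ht : 1 ≤ t) (htZ : t ≤ Z) : pD Z σ b t = 1 :=
  pD_eq_of_forall_lt (by omega) ht hb hσ fun s hs hs1 => by omega

def buildingBlock (Z t : ℕ) : ℕ :=
  if t = 1 ∨ (Z - Z / 2 + 1 ≤ t ∧ t ≤ Z) then 1 else 0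

theorem buildingBlock_eq_one_iff {Z t : ℕ} :
    buildingBlock Z t = 1 ↔ t = 1 ∨ (Z - Z / 2 + 1 ≤ t ∧ t ≤ Z) := by
  unfold buildingBlock; split_ifs <;> simp_all

theorem buildingBlock_eq_zero_iff {Z t : ℕ} :
    buildingBlock Z t = 0 ↔ ¬(t = 1 ∨ (Z - Z / 2 + 1 ≤ t ∧ t ≤ Z)) := by
  unfold buildingBlock; split_ifs <;> simp_all

theorem sum_Icc_buildingBlock {M : Type*} [AddCommMonoid M] (f : ℕ → M) (Z : ℕ) :
    ∑ t ∈ Icc (Z - Z / 2 + 1) Z, f t = ∑ k ∈ range (Z / 2), f (Z - Z / 2 + 1 + k) := by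
  rw [sum_Icc_succ_eq_sum_range, Nat.sub_sub_self (Nat.div_le_self Z 2)]

theorem latN_buildingBlock_all_miss {Z : ℕ} (hZ : 1 ≤ Z) :
    latN Z Z (buildingBlock Z) (fun _ => false) = Z + ∑ k ∈ range (Z / 2), (Z / 2 - k) := by
  rw [latN_eq_sum (S := insert 1 (Icc (Z - Z / 2 + 1) Z)) ?_ ?_, sum_insert (by simp; omega),
    pD_eq_one rfl rfl le_rfl hZ, sum_Icc_buildingBlock]
  · refine congrArg₂ (· + ·) rfl (sum_congr rfl fun k hk => ?_)
    have hk := mem_range.1 hk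
    have hσ : buildingBlock Z 1 = buildingBlock Z (Z - Z / 2 + 1 + k) := by
      rw [buildingBlock_eq_one_iff.2 (Or.inl rfl), buildingBlock_eq_one_iff.2 (by omega)]
    rw [pD_eq_one rfl hσ (by omega) (by omega)]
    omega
  · intro t _
    simp only [mem_insert, mem_Icc, ne_eq, buildingBlock_eq_zero_iff, not_not, and_true]
  · intro t ht
    simp only [mem_insert, mem_Icc] at ht ⊢
    omega

theorem latN_buildingBlock_first_hit (Z : ℕ) :
    latN Z Z (buildingBlock Z) (fun t => decide (t = 1)) = ∑ k ∈ range (Z / 2), (Z - k) := by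
  rw [latN_eq_sum (S := Icc (Z - Z / 2 + 1) Z) ?_ ?_, sum_Icc_buildingBlock]
  · refine sum_congr rfl fun k hk => ?_
    have hk := mem_range.1 hk
    have hσ : buildingBlock Z (Z - Z / 2 + 1) = buildingBlock Z (Z - Z / 2 + 1 + k) := by
      rw [buildingBlock_eq_one_iff.2 (by omega), buildingBlock_eq_one_iff.2 (by omega)]
    rw [pD_eq_of_forall_lt (by omega) (by omega) (by simp; omega) hσ fun s hs hsk hb => ?_]
    · omega
    · simp only [decide_eq_false_iff_not] at hb
      rw [← hσ, buildingBlock_eq_zero_iff.2 (by omega), buildingBlock_eq_one_iff.2 (by omega)]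
      exact zero_ne_one
  · intro t ht
    simp only [mem_Icc] at ht ⊢
    simp only [ne_eq, buildingBlock_eq_zero_iff, not_not, decide_eq_false_iff_not]
    omega
  · intro t ht
    simp only [mem_Icc] at ht ⊢
    omega

/-- Building block: the item is requested at time `1` and at times
`Z-z+1, …, Z` with `z = ⌊Z/2⌋`.  If all requests miss the total latency is
`Z + z(z+1)/2`; if the first request hits and the rest miss it is
`(Z+1)z - z(z+1)/2`. -/
theorem building_block_latencies (Z : ℕ) (hZ : 1 ≤ Z) :
    latN Z Z (fun t => if t = 1 ∨ (Z - Z / 2 + 1 ≤ t ∧ t ≤ Z) then 1 else 0)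
        (fun _ => false)
      = Z + (Z / 2) * (Z / 2 + 1) / 2 ∧
    latN Z Z (fun t => if t = 1 ∨ (Z - Z / 2 + 1 ≤ t ∧ t ≤ Z) then 1 else 0)
        (fun t => decide (t = 1))
      = (Z + 1) * (Z / 2) - (Z / 2) * (Z / 2 + 1) / 2 :=
  ⟨by rw [← sum_range_tsub_self]; exact latN_buildingBlock_all_miss hZ,
   by rw [← sum_range_tsub_of_le (Nat.div_le_self Z 2)]; exact latN_buildingBlock_first_hit Z⟩
end

section
/- For any algorithm A in the antimonotone delayed hits model with cache size k, there is an algorithm B in the (standard) delayed hits model with cache size k + Z whose latency on every request sequence is at most that of A: for every σ and every request t, the latency B incurs on request t is at most the latency A incurs on request t. -/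
/-- `p_t` for the antimonotone delayed hits model: earliest request for the
same item in the window, hit or miss (every request is forwarded to the
backing store). -/
noncomputable def pA (Z : ℕ) (σ : ℕ → ℕ) (t : ℕ) : ℕ :=
  sInf {s | max 1 (t + 1 - Z) ≤ s ∧ s ≤ t ∧ σ s = σ t}

/-- The item retrieved after the request history `l` in the standard model:
the request `Z` steps back, provided it was a miss. -/
def retrieved (Z : ℕ) (Alg : List ℕ → Finset ℕ) (l : List ℕ) : Finset ℕ :=
  if Z ≤ l.length ∧ l.getD (l.length - Z) 0 ≠ 0 ∧
      l.getD (l.length - Z) 0 ∉ Alg (l.take (l.length - Z))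
  then {l.getD (l.length - Z) 0} else ∅

/-- The item retrieved after the request history `l` in the antimonotone
model: the request `Z` steps back, hit or miss. -/
def retrievedAnti (Z : ℕ) (l : List ℕ) : Finset ℕ :=
  if Z ≤ l.length ∧ l.getD (l.length - Z) 0 ≠ 0
  then {l.getD (l.length - Z) 0} else ∅

/-- A deterministic online algorithm with cache size `k` in the standard
delayed hits model. -/
def OnlineValid (Z k : ℕ) (Alg : List ℕ → Finset ℕ) : Prop :=
  Alg [] = Finset.Icc 1 k ∧ (∀ l, (Alg l).card ≤ k) ∧
    ∀ l i, (retrieved Z Alg (l ++ [i]) = ∅ → Alg (l ++ [i]) = Alg l) ∧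
      Alg (l ++ [i]) ⊆ Alg l ∪ retrieved Z Alg (l ++ [i])

/-- A deterministic online algorithm with cache size `k` in the antimonotone
delayed hits model. -/
def OnlineValidAnti (Z k : ℕ) (Alg : List ℕ → Finset ℕ) : Prop :=
  Alg [] = Finset.Icc 1 k ∧ (∀ l, (Alg l).card ≤ k) ∧
    ∀ l i, (retrievedAnti Z (l ++ [i]) = ∅ → Alg (l ++ [i]) = Alg l) ∧
      Alg (l ++ [i]) ⊆ Alg l ∪ retrievedAnti Z (l ++ [i])

/-- The first `m` requests of `σ` as a list. -/
def prefList (σ : ℕ → ℕ) (m : ℕ) : List ℕ := (List.range m).map fun s => σ (s + 1)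

/-- The hit vector of an online algorithm `Alg` on `σ`. -/
def algHit (σ : ℕ → ℕ) (Alg : List ℕ → Finset ℕ) (t : ℕ) : Bool :=
  decide (σ t ∈ Alg (prefList σ (t - 1)))


def Bfun (Z k : ℕ) (hZ : 1 ≤ Z) (AlgA : List ℕ → Finset ℕ) (l : List ℕ) : Finset ℕ :=
  if l = [] then Finset.Icc 1 (k + Z)
  else
    if Z ≤ l.length ∧ l.getD (l.length - Z) 0 ≠ 0 ∧
        l.getD (l.length - Z) 0 ∉ Bfun Z k hZ AlgA (l.take (l.length - Z)) then
      AlgA l ∪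
        ((Finset.Icc (max 1 (l.length + 2 - Z)) l.length).filter
            (fun s => l.getD (s - 1) 0 ≠ 0 ∧
              l.getD (s - 1) 0 ∈ Bfun Z k hZ AlgA (l.take (min (s - 1) (l.length - 1))))).image
          (fun s => l.getD (s - 1) 0) ∪
        {l.getD (l.length - Z) 0}
    else Bfun Z k hZ AlgA l.dropLast
termination_by l.length
decreasing_by
  all_goals simp [List.length_take, List.length_dropLast]
  all_goals
    have : 1 ≤ l.length := List.length_pos_iff.mpr (by assumption)
    omega

variable {Z k : ℕ} {hZ : 1 ≤ Z} {AlgA : List ℕ → Finset ℕ}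

def Sside (Z k : ℕ) (hZ : 1 ≤ Z) (AlgA : List ℕ → Finset ℕ) (l : List ℕ) : Finset ℕ :=
  ((Finset.Icc (max 1 (l.length + 2 - Z)) l.length).filter
      (fun s => l.getD (s - 1) 0 ≠ 0 ∧
        l.getD (s - 1) 0 ∈ Bfun Z k hZ AlgA (l.take (min (s - 1) (l.length - 1))))).image
    (fun s => l.getD (s - 1) 0)

lemma Bfun_ne_nil (l : List ℕ) (hl : l ≠ []) :
    Bfun Z k hZ AlgA l =
      if Z ≤ l.length ∧ l.getD (l.length - Z) 0 ≠ 0 ∧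
          l.getD (l.length - Z) 0 ∉ Bfun Z k hZ AlgA (l.take (l.length - Z)) then
        AlgA l ∪ Sside Z k hZ AlgA l ∪ {l.getD (l.length - Z) 0}
      else Bfun Z k hZ AlgA l.dropLast := by
  rw [Bfun, if_neg hl]; rfl

lemma getD_concat_lt (l : List ℕ) (i : ℕ) (p : ℕ) (hp : p < l.length) :
    (l ++ [i]).getD p 0 = l.getD p 0 := by
  simp [List.getD, List.getElem?_append_left hp]

lemma getD_concat_len (l : List ℕ) (i : ℕ) :
    (l ++ [i]).getD l.length 0 = i := by
  simp [List.getD]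

lemma take_concat_le (l : List ℕ) (i : ℕ) (p : ℕ) (hp : p ≤ l.length) :
    (l ++ [i]).take p = l.take p := by
  rw [List.take_append_of_le_length hp]

lemma Bfun_nil : Bfun Z k hZ AlgA [] = Finset.Icc 1 (k + Z) := by rw [Bfun]; simp

lemma retention (L : List ℕ) : ∀ p : ℕ, p < L.length → L.length + 1 ≤ p + Z →
    L.getD p 0 ≠ 0 → L.getD p 0 ∈ Bfun Z k hZ AlgA (L.take p) →
    L.getD p 0 ∈ Bfun Z k hZ AlgA L := by
  induction L using List.reverseRecOn with
  | nil => intro p hp; simp at hp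
  | append_singleton l i IH =>
    intro p hp hlen hx hmem
    have hL : (l ++ [i] : List ℕ) ≠ [] := by simp
    have hlen' : (l ++ [i] : List ℕ).length = l.length + 1 := by simp
    rw [Bfun_ne_nil _ hL]
    split
    · -- cond true: goes into Sside
      refine Finset.mem_union_left _ (Finset.mem_union_right _ ?_)
      rw [Sside, Finset.mem_image]
      refine ⟨p + 1, ?_, by simp⟩
      rw [Finset.mem_filter, Finset.mem_Icc]
      have hple : p ≤ l.length := by omega
      constructor
      · constructor
        · simp only [hlen']; omega
        · simp only [hlen']; omega
      · constructor
        · exact hx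
        · have : min (p + 1 - 1) ((l ++ [i]).length - 1) = p := by
            simp only [hlen']; omega
          rw [this]
          simpa using hmem
    · rw [List.dropLast_concat]
      rcases lt_or_eq_of_le (Nat.lt_succ_iff.mp (hlen' ▸ hp)) with hlt | heq
      · have e1 : (l ++ [i]).getD p 0 = l.getD p 0 := getD_concat_lt l i p hlt
        have e2 : (l ++ [i]).take p = l.take p := take_concat_le l i p hlt.le
        rw [e1] at hx hmem ⊢
        rw [e2] at hmem
        exact IH p hlt (by omega) hx hmem
      · have e2 : (l ++ [i]).take p = l := by
          subst heq
          rw [take_concat_le l i _ le_rfl, List.take_length]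
        rw [e2] at hmem
        exact hmem

lemma j_mem_of_hit (l : List ℕ) (i : ℕ)
    (hj0 : (l ++ [i]).getD ((l ++ [i]).length - Z) 0 ≠ 0)
    (hZn : Z ≤ (l ++ [i]).length)
    (hjm : (l ++ [i]).getD ((l ++ [i]).length - Z) 0 ∈
      Bfun Z k hZ AlgA ((l ++ [i]).take ((l ++ [i]).length - Z))) :
    (l ++ [i]).getD ((l ++ [i]).length - Z) 0 ∈ Bfun Z k hZ AlgA l := by
  have hlen : (l ++ [i]).length = l.length + 1 := by simp
  set p := (l ++ [i]).length - Z with hp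
  rcases lt_or_eq_of_le (show p ≤ l.length by omega) with hlt | heq
  · have e1 : (l ++ [i]).getD p 0 = l.getD p 0 := getD_concat_lt l i p hlt
    have e2 : (l ++ [i]).take p = l.take p := take_concat_le l i p hlt.le
    rw [e1] at hj0 hjm ⊢
    rw [e2] at hjm
    exact retention l p hlt (by omega) hj0 hjm
  · have e2 : (l ++ [i]).take p = l := by
      rw [take_concat_le l i p heq.le, heq, List.take_length]
    rw [e2] at hjm
    exact hjm

lemma Sside_sub (l : List ℕ) (i : ℕ) :
    Sside Z k hZ AlgA (l ++ [i]) ⊆ Bfun Z k hZ AlgA l := by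
  intro x hx
  rw [Sside, Finset.mem_image] at hx
  obtain ⟨s, hs, rfl⟩ := hx
  rw [Finset.mem_filter, Finset.mem_Icc] at hs
  obtain ⟨⟨hs1, hs2⟩, hx0, hxm⟩ := hs
  have hlen : (l ++ [i]).length = l.length + 1 := by simp
  have hs1' : 1 ≤ s := le_trans (le_max_left _ _) hs1
  have hs1'' : (l ++ [i]).length + 2 - Z ≤ s := le_trans (le_max_right _ _) hs1
  rcases lt_or_eq_of_le (show s ≤ l.length + 1 by omega) with hlt | heq
  · have hp : s - 1 < l.length := by omega
    have emin : min (s - 1) ((l ++ [i]).length - 1) = s - 1 := by omega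
    rw [emin] at hxm
    have e1 : (l ++ [i]).getD (s - 1) 0 = l.getD (s - 1) 0 := getD_concat_lt l i _ hp
    have e2 : (l ++ [i]).take (s - 1) = l.take (s - 1) := take_concat_le l i _ hp.le
    rw [e1] at hx0 hxm ⊢
    rw [e2] at hxm
    exact retention l (s - 1) hp (by omega) hx0 hxm
  · have emin : min (s - 1) ((l ++ [i]).length - 1) = l.length := by omega
    rw [emin] at hxm
    have e2 : (l ++ [i]).take l.length = l := by
      rw [take_concat_le l i _ le_rfl, List.take_length]
    rw [e2] at hxm
    exact hxm

lemma AlgA_sub (hA : OnlineValidAnti Z k AlgA) (L : List ℕ) :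
    AlgA L ⊆ Bfun Z k hZ AlgA L := by
  induction L using List.reverseRecOn with
  | nil =>
    rw [hA.1, Bfun_nil]
    exact Finset.Icc_subset_Icc_right (Nat.le_add_right k Z)
  | append_singleton l i IH =>
    obtain ⟨heq, hsub⟩ := hA.2.2 l i
    rw [Bfun_ne_nil _ (by simp)]
    split
    · exact (Finset.subset_union_left.trans Finset.subset_union_left)
    · rename_i hc
      rw [List.dropLast_concat]
      by_cases hra : retrievedAnti Z (l ++ [i]) = ∅
      · rw [heq hra]; exact IH
      · rw [retrievedAnti] at hra
        have hcond : Z ≤ (l ++ [i]).length ∧ (l ++ [i]).getD ((l ++ [i]).length - Z) 0 ≠ 0 := by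
          by_contra hcon
          rw [if_neg hcon] at hra
          exact hra rfl
        have hjB : (l ++ [i]).getD ((l ++ [i]).length - Z) 0 ∈
            Bfun Z k hZ AlgA ((l ++ [i]).take ((l ++ [i]).length - Z)) := by
          by_contra hnot
          exact hc ⟨hcond.1, hcond.2, hnot⟩
        have hjl := j_mem_of_hit l i hcond.2 hcond.1 hjB
        intro x hx
        rcases Finset.mem_union.mp (hsub hx) with h | h
        · exact IH h
        · rw [retrievedAnti, if_pos hcond, Finset.mem_singleton] at h
          rw [h]; exact hjl

lemma card_B (hA : OnlineValidAnti Z k AlgA) (L : List ℕ) :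
    (Bfun Z k hZ AlgA L).card ≤ k + Z := by
  induction L using List.reverseRecOn with
  | nil => rw [Bfun_nil]; simp [Nat.card_Icc]
  | append_singleton l i IH =>
    rw [Bfun_ne_nil _ (by simp)]
    split
    · rename_i hc
      refine le_trans (Finset.card_union_le _ _) ?_
      refine le_trans (Nat.add_le_add_right (Finset.card_union_le _ _) _) ?_
      have h1 : (AlgA (l ++ [i])).card ≤ k := hA.2.1 _
      have h2 : (Sside Z k hZ AlgA (l ++ [i])).card ≤ Z - 1 := by
        refine le_trans (Finset.card_image_le) ?_
        refine le_trans (Finset.card_filter_le _ _) ?_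
        rw [Nat.card_Icc]
        have : Z ≤ (l ++ [i]).length := hc.1
        omega
      have h3 : ({(l ++ [i]).getD ((l ++ [i]).length - Z) 0} : Finset ℕ).card = 1 :=
        Finset.card_singleton _
      omega
    · rw [List.dropLast_concat]; exact IH


lemma prefList_length (σ : ℕ → ℕ) (m : ℕ) : (prefList σ m).length = m := by
  simp [prefList]

lemma prefList_getD (σ : ℕ → ℕ) {m p : ℕ} (h : p < m) :
    (prefList σ m).getD p 0 = σ (p + 1) := by
  simp [prefList, List.getD, List.getElem?_map, List.getElem?_range h]

lemma prefList_take (σ : ℕ → ℕ) {m p : ℕ} (h : p ≤ m) :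
    (prefList σ m).take p = prefList σ p := by
  simp [prefList, ← List.map_take, List.take_range, Nat.min_eq_left h]

/-- Any algorithm `A` with cache size `k` for antimonotone delayed hits can be
transformed into an algorithm `B` with cache size `k + Z` for (standard)
delayed hits such that on every request sequence, the latency `B` incurs on
each request is at most the latency `A` incurs on that request. -/
theorem anti_to_standard_reduction (Z k : ℕ) (hZ : 1 ≤ Z)
    (AlgA : List ℕ → Finset ℕ) (hA : OnlineValidAnti Z k AlgA) :
    ∃ AlgB : List ℕ → Finset ℕ, OnlineValid Z (k + Z) AlgB ∧
      ∀ (σ : ℕ → ℕ) (t : ℕ), 1 ≤ t →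
        (if σ t = 0 ∨ algHit σ AlgB t then 0
          else Z - (t - pD Z σ (algHit σ AlgB) t))
        ≤ (if σ t = 0 ∨ algHit σ AlgA t then 0
            else Z - (t - pA Z σ t)) := by
  refine ⟨Bfun Z k hZ AlgA, ⟨Bfun_nil, card_B hA, ?_⟩, ?_⟩
  · intro l i
    have hL : (l ++ [i] : List ℕ) ≠ [] := by simp
    constructor
    · intro hre
      rw [retrieved] at hre
      rw [Bfun_ne_nil _ hL]
      have hnc : ¬(Z ≤ (l ++ [i]).length ∧ (l ++ [i]).getD ((l ++ [i]).length - Z) 0 ≠ 0 ∧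
          (l ++ [i]).getD ((l ++ [i]).length - Z) 0 ∉
            Bfun Z k hZ AlgA ((l ++ [i]).take ((l ++ [i]).length - Z))) := by
        intro hc
        rw [if_pos hc] at hre
        exact Finset.singleton_ne_empty _ hre
      rw [if_neg hnc, List.dropLast_concat]
    · rw [Bfun_ne_nil _ hL, retrieved]
      by_cases hc : Z ≤ (l ++ [i]).length ∧ (l ++ [i]).getD ((l ++ [i]).length - Z) 0 ≠ 0 ∧
          (l ++ [i]).getD ((l ++ [i]).length - Z) 0 ∉
            Bfun Z k hZ AlgA ((l ++ [i]).take ((l ++ [i]).length - Z))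
      · rw [if_pos hc, if_pos hc]
        obtain ⟨heq, hsub⟩ := hA.2.2 l i
        intro x hx
        rcases Finset.mem_union.mp hx with hx | hx
        · rcases Finset.mem_union.mp hx with hx | hx
          · rcases Finset.mem_union.mp (hsub hx) with h | h
            · exact Finset.mem_union_left _ (AlgA_sub hA l h)
            · rw [retrievedAnti, if_pos ⟨hc.1, hc.2.1⟩] at h
              exact Finset.mem_union_right _ h
          · exact Finset.mem_union_left _ (Sside_sub l i hx)
        · exact Finset.mem_union_right _ hx
      · rw [if_neg hc, if_neg hc, List.dropLast_concat]
        exact Finset.subset_union_left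
  · intro σ t ht
    by_cases hB : σ t = 0 ∨ algHit σ (Bfun Z k hZ AlgA) t
    · rw [if_pos hB]
      exact Nat.zero_le _
    · push_neg at hB
      obtain ⟨h0, hBmiss⟩ := hB
      have hBnot : σ t ∉ Bfun Z k hZ AlgA (prefList σ (t - 1)) := by
        intro hmem
        exact hBmiss (by simp [algHit, hmem])
      have hAmiss : ¬(σ t = 0 ∨ algHit σ AlgA t) := by
        rintro (h | h)
        · exact h0 h
        · rw [algHit, decide_eq_true_iff] at h
          exact hBnot (AlgA_sub hA _ h)
      rw [if_neg hAmiss, if_neg (by rintro (h | h); exacts [h0 h, hBmiss h])]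
      -- show pD ≤ pA
      have hsetne : {s | max 1 (t + 1 - Z) ≤ s ∧ s ≤ t ∧ σ s = σ t}.Nonempty :=
        ⟨t, by omega, le_rfl, rfl⟩
      set q := sInf {s | max 1 (t + 1 - Z) ≤ s ∧ s ≤ t ∧ σ s = σ t} with hqdef
      have hpA : pA Z σ t = q := rfl
      obtain ⟨hp1, hp2, hp3⟩ := Nat.sInf_mem hsetne
      rw [← hqdef] at hp1 hp2 hp3
      have hq1 : 1 ≤ q := le_trans (le_max_left _ _) hp1
      have hq2 : t + 1 - Z ≤ q := le_trans (le_max_right _ _) hp1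
      have hmissq : algHit σ (Bfun Z k hZ AlgA) q = false := by
        rcases lt_or_eq_of_le hp2 with hlt | heq
        · by_contra hhit
          rw [Bool.not_eq_false, algHit, decide_eq_true_iff] at hhit
          have hret := retention (Z := Z) (k := k) (hZ := hZ) (AlgA := AlgA) (prefList σ (t - 1)) (q - 1)
            (by rw [prefList_length]; omega) (by rw [prefList_length]; omega)
          rw [prefList_getD σ (show q - 1 < t - 1 by omega),
            prefList_take σ (show q - 1 ≤ t - 1 by omega),
            show q - 1 + 1 = q by omega, hp3] at hret
          exact hBnot (hret h0 (hp3 ▸ hhit))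
        · rw [heq]
          simpa [algHit] using hBnot
      have hpD : pD Z σ (algHit σ (Bfun Z k hZ AlgA)) t ≤ q :=
        Nat.sInf_le ⟨hp1, hp2, hmissq, hp3⟩
      rw [hpA]
      have h1 : t - q ≤ t - pD Z σ (algHit σ (Bfun Z k hZ AlgA)) t :=
        Nat.sub_le_sub_left hpD t
      exact Nat.sub_le_sub_left h1 Z
end
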